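/- Under the hypotheses of the Hamiltonian DFS condition (S_α |k⟩ = c_α |k⟩ for all |k⟩ in an H_S-invariant subspace H̃), if the initial state is ρ_S(0) ⊗ ρ_B(0) with ρ_S(0) supported on H̃, then the reduced system state ρ_S(t) = Tr_B[e^{-iHt} (ρ_S(0) ⊗ ρ_B(0)) e^{iHt}] equals U_S(t) ρ_S(0) U_S(t)† with U_S(t) = exp(-iH_S t); i.e., the reduced evolution on H̃ is unitary. -/

import Mathlib

open Kronecker Matrix
open scoped ComplexOrder

/-- Partial trace over the bath: `(Tr_B ρ)_{ij} = ∑_k ρ_{(i,k),(j,k)}`. -/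
noncomputable def ptraceB {n m : ℕ} (ρ : Matrix (Fin n × Fin m) (Fin n × Fin m) ℂ) :
    Matrix (Fin n) (Fin n) ℂ :=
  Matrix.of fun i j => ∑ k : Fin m, ρ (i, k) (j, k)

/-!
On the subspace `H̃ ⊗ H_B` each coupling `S_α ⊗ B_α` acts as `1 ⊗ c_α B_α`, so there the
Hamiltonian `H` agrees with the decoupled `H' = H_S ⊗ 1 + 1 ⊗ H_B'`, `H_B' = H_B + ∑ c_α B_α`,
which leaves `H̃ ⊗ H_B` invariant. As `ρ = ρ_S ⊗ ρ_B` has range in `H̃ ⊗ H_B`, term by term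
in the exponential series `e^{-iHt} ρ = e^{-iH't} ρ`, and since `ρ` is Hermitian also
`e^{-iHt} ρ e^{iHt} = e^{-iH't} ρ e^{iH't} = U_S ρ_S U_S† ⊗ W ρ_B W†` with `W = e^{-iH_B't}`.
The `c_α` are eigenvalues of the Hermitian `S_α` (and `H̃ ≠ 0` because `tr ρ_S = 1`), hence
real; so `W` is unitary and the bath factor has trace `tr ρ_B = 1`.
-/

open NormedSpace

theorem NormedSpace.exp_mul_eq_exp_mul_of_pow_mul_eq {𝔸 : Type*} [NormedRing 𝔸]
    [NormedAlgebra ℚ 𝔸] [CompleteSpace 𝔸] {x y r : 𝔸} (h : ∀ j : ℕ, x ^ j * r = y ^ j * r) :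
    exp x * r = exp y * r := by
  simp only [exp_eq_tsum ℚ, ← (expSeries_summable' x).tsum_mul_right,
    ← (expSeries_summable' y).tsum_mul_right, smul_mul_assoc, h]

namespace Matrix

section Exp

variable {ι κ 𝕜 : Type*} [Fintype ι] [Fintype κ] [DecidableEq ι] [DecidableEq κ] [RCLike 𝕜]

theorem exp_mul_eq_exp_mul_of_pow_mul_eq {A A' ρ : Matrix ι ι 𝕜}
    (h : ∀ j : ℕ, A ^ j * ρ = A' ^ j * ρ) : exp A * ρ = exp A' * ρ :=
  open scoped Norms.Operator in NormedSpace.exp_mul_eq_exp_mul_of_pow_mul_eq h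

theorem map_exp_of_continuous (f : Matrix ι ι 𝕜 →+* Matrix κ κ 𝕜) (hf : Continuous f)
    (A : Matrix ι ι 𝕜) : f (exp A) = exp (f A) :=
  open scoped Norms.Operator in map_exp f hf A

theorem pow_mulVec_eqOn {R : Type*} [Semiring R] {A A' : Matrix ι ι R} {V : Set (ι → R)}
    (h : Set.EqOn (A *ᵥ ·) (A' *ᵥ ·) V) (hA' : Set.MapsTo (A' *ᵥ ·) V V) :
    ∀ j : ℕ, Set.EqOn (A ^ j *ᵥ ·) (A' ^ j *ᵥ ·) V
  | 0 => fun _ _ => rfl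
  | j + 1 => fun x hx => by
    simp only [pow_succ, ← mulVec_mulVec, h hx, pow_mulVec_eqOn h hA' j (hA' hx)]

theorem exp_smul_mul_eq_of_mulVec_eq {V : Submodule 𝕜 (ι → 𝕜)} {A A' ρ : Matrix ι ι 𝕜}
    (h : ∀ x ∈ V, A *ᵥ x = A' *ᵥ x) (hA' : ∀ x ∈ V, A' *ᵥ x ∈ V) (hρ : ∀ v, ρ *ᵥ v ∈ V)
    (z : 𝕜) : exp (z • A) * ρ = exp (z • A') * ρ := by
  refine exp_mul_eq_exp_mul_of_pow_mul_eq fun j => ?_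
  simp only [smul_pow, smul_mul_assoc]
  congr 1
  refine ext_iff_mulVec.2 fun v => ?_
  simp only [← mulVec_mulVec]
  exact pow_mulVec_eqOn (V := V) (fun x hx => h x hx) (fun x hx => hA' x hx) j (hρ v)

end Exp

section Kronecker

variable {R ι κ : Type*} [CommSemiring R] [Fintype ι] [Fintype κ] [DecidableEq ι]
  [DecidableEq κ]

variable (R ι κ) in
def kroneckerOneRingHom : Matrix ι ι R →+* Matrix (ι × κ) (ι × κ) R where
  toFun A := A ⊗ₖ (1 : Matrix κ κ R)
  map_one' := one_kronecker_one
  map_mul' A B := by rw [← mul_kronecker_mul, one_mul]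
  map_zero' := zero_kronecker _
  map_add' A B := add_kronecker A B _

variable (R ι κ) in
def oneKroneckerRingHom : Matrix κ κ R →+* Matrix (ι × κ) (ι × κ) R where
  toFun B := (1 : Matrix ι ι R) ⊗ₖ B
  map_one' := one_kronecker_one
  map_mul' A B := by rw [← mul_kronecker_mul, one_mul]
  map_zero' := kronecker_zero _
  map_add' A B := kronecker_add _ A B

theorem commute_kronecker_one_one_kronecker (X : Matrix ι ι R) (Y : Matrix κ κ R) :
    Commute (X ⊗ₖ (1 : Matrix κ κ R)) ((1 : Matrix ι ι R) ⊗ₖ Y) := by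
  simp only [Commute, SemiconjBy, ← mul_kronecker_mul, one_mul, mul_one]

theorem exp_kronecker_one_add_one_kronecker {𝕜 : Type*} [RCLike 𝕜] (X : Matrix ι ι 𝕜)
    (Y : Matrix κ κ 𝕜) :
    exp (X ⊗ₖ (1 : Matrix κ κ 𝕜) + (1 : Matrix ι ι 𝕜) ⊗ₖ Y) = exp X ⊗ₖ exp Y := by
  have hX : Continuous (kroneckerOneRingHom 𝕜 ι κ) :=
    continuous_matrix fun i j => (continuous_apply_apply i.1 j.1).mul continuous_const
  have hY : Continuous (oneKroneckerRingHom 𝕜 ι κ) :=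
    continuous_matrix fun i j => continuous_const.mul (continuous_apply_apply i.2 j.2)
  rw [exp_add_of_commute _ _ (commute_kronecker_one_one_kronecker X Y),
    ← mul_one (exp X), ← one_mul (exp Y), mul_kronecker_mul]
  exact congr_arg₂ (· * ·) (map_exp_of_continuous _ hX X).symm (map_exp_of_continuous _ hY Y).symm

end Kronecker

section Hermitian

variable {ι κ : Type*}

theorem IsHermitian.kronecker {R : Type*} [CommSemiring R] [StarRing R] {A : Matrix ι ι R}
    {B : Matrix κ κ R} (hA : A.IsHermitian) (hB : B.IsHermitian) : (A ⊗ₖ B).IsHermitian := by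
  rw [IsHermitian, conjTranspose_kronecker, hA.eq, hB.eq]

variable [Fintype ι]

theorem mul_mul_conjTranspose_eq_of_mul_eq {R : Type*} [CommSemiring R] [StarRing R]
    {M M' : Matrix κ ι R} {ρ : Matrix ι ι R} (hρ : ρ.IsHermitian) (h : M * ρ = M' * ρ) :
    M * ρ * Mᴴ = M' * ρ * M'ᴴ :=
  calc M * ρ * Mᴴ = M' * (ρᴴ * Mᴴ) := by rw [h, Matrix.mul_assoc, hρ.eq]
    _ = M' * (M' * ρ)ᴴ := by rw [← conjTranspose_mul, h]
    _ = M' * ρ * M'ᴴ := by rw [conjTranspose_mul, hρ.eq, Matrix.mul_assoc]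

theorem IsHermitian.star_eq_of_mulVec_eq_smul {𝕜 : Type*} [RCLike 𝕜] {S : Matrix ι ι 𝕜}
    (hS : S.IsHermitian) {v : ι → 𝕜} (hv : v ≠ 0) {c : 𝕜} (hSv : S *ᵥ v = c • v) :
    star c = c := by
  have hq : star v ⬝ᵥ v ≠ 0 := dotProduct_star_self_eq_zero.not.2 hv
  refine (mul_right_cancel₀ hq ?_).symm
  calc c * (star v ⬝ᵥ v) = star v ⬝ᵥ (S *ᵥ v) := by rw [hSv, dotProduct_smul, smul_eq_mul]
    _ = star (S *ᵥ v) ⬝ᵥ v := by rw [dotProduct_mulVec, star_mulVec, hS.eq]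
    _ = star c * (star v ⬝ᵥ v) := by rw [hSv, star_smul, smul_dotProduct, smul_eq_mul]

variable [DecidableEq ι]

theorem IsHermitian.conjTranspose_exp_neg_I_mul_smul {A : Matrix ι ι ℂ} (hA : A.IsHermitian)
    (t : ℝ) :
    (NormedSpace.exp ((-(Complex.I * t)) • A))ᴴ = NormedSpace.exp ((Complex.I * t) • A) := by
  rw [← exp_conjTranspose, conjTranspose_smul, hA.eq]
  simp [Complex.conj_ofReal]

theorem IsHermitian.conjTranspose_exp_neg_I_mul_smul_mul_self {A : Matrix ι ι ℂ}
    (hA : A.IsHermitian) (t : ℝ) :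
    (NormedSpace.exp ((-(Complex.I * t)) • A))ᴴ * NormedSpace.exp ((-(Complex.I * t)) • A) =
      1 := by
  rw [hA.conjTranspose_exp_neg_I_mul_smul, ← exp_add_of_commute _ _
    (((Commute.refl A).smul_left _).smul_right _), ← add_smul, add_neg_cancel, zero_smul,
    exp_zero]

end Hermitian

end Matrix

namespace Submodule

variable {R ι : Type*} [Semiring R]

/-- The subspace `W ⊗ R^κ` of `R^(ι × κ)`, described by its slices `i ↦ x (i, k)`. -/
def slicewise (W : Submodule R (ι → R)) (κ : Type*) : Submodule R (ι × κ → R) where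
  carrier := {x | ∀ k, (fun i => x (i, k)) ∈ W}
  add_mem' hx hy k := W.add_mem (hx k) (hy k)
  zero_mem' _ := W.zero_mem
  smul_mem' c _ hx k := W.smul_mem c (hx k)

end Submodule

namespace Matrix

variable {R ι ι' κ κ' : Type*} [CommSemiring R] [Fintype ι'] [Fintype κ']

theorem kronecker_mulVec_slice (A : Matrix ι ι' R) (B : Matrix κ κ' R) (x : ι' × κ' → R)
    (k : κ) : (fun i => (A ⊗ₖ B *ᵥ x) (i, k)) = ∑ l, B k l • A *ᵥ fun i => x (i, l) := by
  ext i
  simp only [mulVec, dotProduct, kroneckerMap_apply, Fintype.sum_prod_type, Finset.sum_apply,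
    Pi.smul_apply, smul_eq_mul, Finset.mul_sum]
  rw [Finset.sum_comm]
  exact Finset.sum_congr rfl fun _ _ => Finset.sum_congr rfl fun _ _ => by ring

theorem kronecker_mulVec_mem_slicewise {W : Submodule R (ι → R)} {A : Matrix ι ι' R}
    (B : Matrix κ κ' R) {x : ι' × κ' → R} (hA : ∀ l, A *ᵥ (fun i => x (i, l)) ∈ W) :
    A ⊗ₖ B *ᵥ x ∈ W.slicewise κ := fun k => by
  rw [kronecker_mulVec_slice]
  exact W.sum_mem fun l _ => W.smul_mem _ (hA l)

variable [Fintype κ] [DecidableEq κ]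

theorem kronecker_one_mulVec_slice (A : Matrix ι ι' R) (x : ι' × κ → R) (k : κ) :
    (fun i => (A ⊗ₖ (1 : Matrix κ κ R) *ᵥ x) (i, k)) = A *ᵥ fun i => x (i, k) := by
  simp [kronecker_mulVec_slice, one_apply, ite_smul]

variable [Fintype ι]

theorem kronecker_one_mulVec_of_mulVec_eq_smul {W : Submodule R (ι → R)} {S : Matrix ι ι R}
    {c : R} (hS : ∀ v ∈ W, S *ᵥ v = c • v) {x : ι × κ → R} (hx : x ∈ W.slicewise κ) :
    S ⊗ₖ (1 : Matrix κ κ R) *ᵥ x = c • x := by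
  ext ⟨i, k⟩
  exact congr_fun ((kronecker_one_mulVec_slice S x k).trans (hS _ (hx k))) i

variable [DecidableEq ι]

theorem kronecker_mulVec_of_mulVec_eq_smul {W : Submodule R (ι → R)} {S : Matrix ι ι R}
    {c : R} (hS : ∀ v ∈ W, S *ᵥ v = c • v) (B : Matrix κ κ R) {x : ι × κ → R}
    (hx : x ∈ W.slicewise κ) :
    S ⊗ₖ B *ᵥ x = (1 : Matrix ι ι R) ⊗ₖ (c • B) *ᵥ x := by
  have hBx : (1 : Matrix ι ι R) ⊗ₖ B *ᵥ x ∈ W.slicewise κ :=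
    kronecker_mulVec_mem_slicewise B fun l => by simpa using hx l
  calc S ⊗ₖ B *ᵥ x = S ⊗ₖ (1 : Matrix κ κ R) *ᵥ ((1 : Matrix ι ι R) ⊗ₖ B *ᵥ x) := by
        rw [mulVec_mulVec, ← mul_kronecker_mul, mul_one, one_mul]
    _ = (1 : Matrix ι ι R) ⊗ₖ (c • B) *ᵥ x := by
        rw [kronecker_one_mulVec_of_mulVec_eq_smul hS hBx, kronecker_smul, smul_mulVec]

theorem kronecker_one_add_one_kronecker_mulVec_mem_slicewise {W : Submodule R (ι → R)}
    {X : Matrix ι ι R} (hX : ∀ v ∈ W, X *ᵥ v ∈ W) (Y : Matrix κ κ R) {x : ι × κ → R}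
    (hx : x ∈ W.slicewise κ) :
    (X ⊗ₖ (1 : Matrix κ κ R) + (1 : Matrix ι ι R) ⊗ₖ Y) *ᵥ x ∈ W.slicewise κ := by
  rw [add_mulVec]
  exact add_mem (kronecker_mulVec_mem_slicewise 1 fun l => hX _ (hx l))
    (kronecker_mulVec_mem_slicewise Y fun l => by simpa using hx l)

theorem kronecker_one_add_one_kronecker_add_sum_mulVec {ν : Type*} [Fintype ν]
    {W : Submodule R (ι → R)} (X : Matrix ι ι R) (Y : Matrix κ κ R) {S : ν → Matrix ι ι R}
    (B : ν → Matrix κ κ R) {c : ν → R} (hS : ∀ a, ∀ v ∈ W, S a *ᵥ v = c a • v)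
    {x : ι × κ → R} (hx : x ∈ W.slicewise κ) :
    (X ⊗ₖ (1 : Matrix κ κ R) + (1 : Matrix ι ι R) ⊗ₖ Y + ∑ a, S a ⊗ₖ B a) *ᵥ x =
      (X ⊗ₖ (1 : Matrix κ κ R) + (1 : Matrix ι ι R) ⊗ₖ (Y + ∑ a, c a • B a)) *ᵥ x := by
  have hsum : (1 : Matrix ι ι R) ⊗ₖ ∑ a, c a • B a = ∑ a, (1 : Matrix ι ι R) ⊗ₖ (c a • B a) :=
    map_sum (oneKroneckerRingHom R ι κ) _ _
  simp only [kronecker_add, ← add_assoc, add_mulVec, hsum, sum_mulVec,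
    kronecker_mulVec_of_mulVec_eq_smul (hS _) _ hx]

end Matrix

theorem ptraceB_kronecker {n m : ℕ} (X : Matrix (Fin n) (Fin n) ℂ)
    (Y : Matrix (Fin m) (Fin m) ℂ) : ptraceB (X ⊗ₖ Y) = Y.trace • X := by
  ext i j
  simp only [ptraceB, trace, diag, Matrix.smul_apply, smul_eq_mul, of_apply, kroneckerMap_apply,
    Finset.sum_mul]
  exact Finset.sum_congr rfl fun _ _ => mul_comm _ _

theorem stmt_6_general {n m K : ℕ}
    (HS : Matrix (Fin n) (Fin n) ℂ) (HB : Matrix (Fin m) (Fin m) ℂ)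
    (S : Fin K → Matrix (Fin n) (Fin n) ℂ) (B : Fin K → Matrix (Fin m) (Fin m) ℂ)
    (hHS : HS.IsHermitian) (hHB : HB.IsHermitian)
    (hSh : ∀ α, (S α).IsHermitian) (hBh : ∀ α, (B α).IsHermitian)
    (Ht : Submodule ℂ (Fin n → ℂ)) (c : Fin K → ℂ)
    (hc : ∀ α, ∀ k ∈ Ht, (S α).mulVec k = c α • k)
    (hinv : ∀ k ∈ Ht, HS.mulVec k ∈ Ht)
    (ρS : Matrix (Fin n) (Fin n) ℂ) (hρSh : ρS.IsHermitian)
    (hρStr : ρS.trace = 1) (hρSsupp : ∀ v, ρS.mulVec v ∈ Ht)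
    (ρB : Matrix (Fin m) (Fin m) ℂ) (hρBh : ρB.IsHermitian)
    (hρBtr : ρB.trace = 1) (t : ℝ) :
    ptraceB
      (NormedSpace.exp ((-(Complex.I * t)) •
          (HS ⊗ₖ (1 : Matrix (Fin m) (Fin m) ℂ) + (1 : Matrix (Fin n) (Fin n) ℂ) ⊗ₖ HB +
            ∑ α, S α ⊗ₖ B α)) *
        (ρS ⊗ₖ ρB) *
        NormedSpace.exp ((Complex.I * t) •
          (HS ⊗ₖ (1 : Matrix (Fin m) (Fin m) ℂ) + (1 : Matrix (Fin n) (Fin n) ℂ) ⊗ₖ HB +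
            ∑ α, S α ⊗ₖ B α))) =
      NormedSpace.exp ((-(Complex.I * t)) • HS) * ρS *
        (NormedSpace.exp ((-(Complex.I * t)) • HS))ᴴ := by
  obtain ⟨v, hv⟩ : ∃ v, ρS *ᵥ v ≠ 0 := by
    by_contra! h
    have hρS : ρS = 0 := ext_iff_mulVec.2 fun v => by rw [h v, zero_mulVec]
    simp [hρS] at hρStr
  have hc_real : ∀ α, IsSelfAdjoint (c α) := fun α =>
    (hSh α).star_eq_of_mulVec_eq_smul hv (hc α _ (hρSsupp v))
  have hHB' : (HB + ∑ α, c α • B α).IsHermitian :=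
    hHB.add (isSelfAdjoint_sum _ fun α _ => (hc_real α).smul (hBh α))
  have hH : (HS ⊗ₖ (1 : Matrix (Fin m) (Fin m) ℂ) + (1 : Matrix (Fin n) (Fin n) ℂ) ⊗ₖ HB +
      ∑ α, S α ⊗ₖ B α).IsHermitian :=
    ((hHS.kronecker isHermitian_one).add (isHermitian_one.kronecker hHB)).add
      (isSelfAdjoint_sum _ fun α _ => (hSh α).kronecker (hBh α))
  have hexp := exp_smul_mul_eq_of_mulVec_eq (V := Ht.slicewise (Fin m))
    (fun x hx => kronecker_one_add_one_kronecker_add_sum_mulVec HS HB B hc hx)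
    (fun x hx => kronecker_one_add_one_kronecker_mulVec_mem_slicewise hinv _ hx)
    (fun v => kronecker_mulVec_mem_slicewise ρB fun l => hρSsupp _) (-(Complex.I * t))
  rw [← hH.conjTranspose_exp_neg_I_mul_smul, mul_mul_conjTranspose_eq_of_mul_eq
    (hρSh.kronecker hρBh) hexp, smul_add, ← smul_kronecker, ← kronecker_smul,
    exp_kronecker_one_add_one_kronecker, conjTranspose_kronecker, ← mul_kronecker_mul,
    ← mul_kronecker_mul, ptraceB_kronecker, trace_mul_cycle,
    hHB'.conjTranspose_exp_neg_I_mul_smul_mul_self, Matrix.one_mul, hρBtr, one_smul]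

/-- Under the Hamiltonian DFS condition (`S_α k = c_α k` on an `H_S`-invariant subspace
`H̃`), if the initial state is `ρ_S ⊗ ρ_B` with `ρ_S` supported on `H̃`, then the reduced
state `Tr_B[e^{-iHt} (ρ_S ⊗ ρ_B) e^{iHt}]` equals `U_S ρ_S U_S†` with
`U_S = e^{-iH_S t}`: the reduced evolution on `H̃` is unitary. -/
theorem stmt_6 {n m K : ℕ}
    (HS : Matrix (Fin n) (Fin n) ℂ) (HB : Matrix (Fin m) (Fin m) ℂ)
    (S : Fin K → Matrix (Fin n) (Fin n) ℂ) (B : Fin K → Matrix (Fin m) (Fin m) ℂ)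
    (hHS : HS.IsHermitian) (hHB : HB.IsHermitian)
    (hSh : ∀ α, (S α).IsHermitian) (hBh : ∀ α, (B α).IsHermitian)
    (Ht : Submodule ℂ (Fin n → ℂ)) (c : Fin K → ℂ)
    (hc : ∀ α, ∀ k ∈ Ht, (S α).mulVec k = c α • k)
    (hinv : ∀ k ∈ Ht, HS.mulVec k ∈ Ht)
    (ρS : Matrix (Fin n) (Fin n) ℂ) (hρSh : ρS.IsHermitian) (hρSpos : ρS.PosSemidef)
    (hρStr : ρS.trace = 1) (hρSsupp : ∀ v, ρS.mulVec v ∈ Ht)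
    (ρB : Matrix (Fin m) (Fin m) ℂ) (hρBh : ρB.IsHermitian) (hρBpos : ρB.PosSemidef)
    (hρBtr : ρB.trace = 1) (t : ℝ) :
    ptraceB
      (NormedSpace.exp ((-(Complex.I * t)) •
          (HS ⊗ₖ (1 : Matrix (Fin m) (Fin m) ℂ) + (1 : Matrix (Fin n) (Fin n) ℂ) ⊗ₖ HB +
            ∑ α, S α ⊗ₖ B α)) *
        (ρS ⊗ₖ ρB) *
        NormedSpace.exp ((Complex.I * t) •
          (HS ⊗ₖ (1 : Matrix (Fin m) (Fin m) ℂ) + (1 : Matrix (Fin n) (Fin n) ℂ) ⊗ₖ HB +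
            ∑ α, S α ⊗ₖ B α))) =
      NormedSpace.exp ((-(Complex.I * t)) • HS) * ρS *
        (NormedSpace.exp ((-(Complex.I * t)) • HS))ᴴ :=
  stmt_6_general HS HB S B hHS hHB hSh hBh Ht c hc hinv ρS hρSh hρStr hρSsupp ρB hρBh hρBtr t
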